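/- Define f(t) = −2(3t²u²(t) − 2v(t) + t)/(t + v(t))² for t ∈ (0,∞), with u(t) = (t-1)/(t·log t) and v(t) = ∫₀ᵗ τu²(τ) dτ. Then f(t) → +∞ as t → 0⁺. -/

import Mathlib

open Real MeasureTheory Filter Set

/-- u(t) = (t-1)/(t·log t) with the removable singularity u(1) = 1. -/
noncomputable def u (t : ℝ) : ℝ := if t = 1 then 1 else (t - 1) / (t * Real.log t)

/-- v(t) = ∫₀ᵗ τ·u(τ)² dτ. -/
noncomputable def v (t : ℝ) : ℝ := ∫ τ in Set.Ioo (0:ℝ) t, τ * u τ ^ 2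

/-- f(t) = −2(3t²u²(t) − 2v(t) + t)/(t + v(t))². -/
noncomputable def f (t : ℝ) : ℝ :=
  -2 * (3 * t ^ 2 * u t ^ 2 - 2 * v t + t) / (t + v t) ^ 2


/-! With `L = -(log t)⁻¹ → 0⁺`: the integrand of `v` is `(τ - 1)²` times the derivative of
`-(log τ)⁻¹`, which vanishes at `0⁺`, so `L / 4 ≤ v t ≤ L` for `t ≤ 1/2`. Also `t²u(t)² ≤ L²`
and `t ≤ 2L²` (as `t log² t ≤ 2`), so the numerator of `f` is at least `L - 10L²` and
`(t + v)² ≤ 4L²`, giving `f t ≥ -log t / 4 - 5 / 2`. -/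

open Topology

namespace Real

/-- The junk value `log 0 = 0` makes the value at `0` agree with the limit. -/
theorem continuousAt_neg_inv_log_zero : ContinuousAt (fun x => -(log x)⁻¹) 0 := by
  rw [← continuousWithinAt_compl_self, ContinuousWithinAt, log_zero, inv_zero, neg_zero]
  simpa using tendsto_log_nhdsNE_zero.inv_tendsto_atBot.neg

theorem continuousOn_neg_inv_log : ContinuousOn (fun x => -(log x)⁻¹) (Ico 0 1) := by
  rintro x ⟨hx0, hx1⟩
  rcases hx0.eq_or_lt with rfl | hx0
  · exact continuousAt_neg_inv_log_zero.continuousWithinAt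
  · exact ((continuousAt_log hx0.ne').inv₀ (log_neg hx0 hx1).ne).neg.continuousWithinAt

theorem hasDerivAt_neg_inv_log {x : ℝ} (hx0 : 0 < x) (hx1 : x ≠ 1) :
    HasDerivAt (fun x => -(log x)⁻¹) (x * log x ^ 2)⁻¹ x := by
  refine ((hasDerivAt_log hx0.ne').inv (log_ne_zero_of_pos_of_ne_one hx0 hx1)).neg.congr_deriv ?_
  field_simp

theorem integrableOn_inv_mul_log_sq {t : ℝ} (ht : t < 1) :
    IntegrableOn (fun x => (x * log x ^ 2)⁻¹) (Ioc 0 t) :=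
  intervalIntegral.integrableOn_deriv_of_nonneg
    (continuousOn_neg_inv_log.mono fun _ hx => ⟨hx.1, hx.2.trans_lt ht⟩)
    (fun x hx => hasDerivAt_neg_inv_log hx.1 (hx.2.trans ht).ne)
    (fun x hx => by have := hx.1; positivity)

theorem integral_inv_mul_log_sq {t : ℝ} (ht0 : 0 ≤ t) (ht : t < 1) :
    ∫ x in Ioc 0 t, (x * log x ^ 2)⁻¹ = -(log t)⁻¹ := by
  rw [← intervalIntegral.integral_of_le ht0,
    intervalIntegral.integral_eq_sub_of_hasDerivAt_of_le ht0
    (continuousOn_neg_inv_log.mono fun _ hx => ⟨hx.1, hx.2.trans_lt ht⟩)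
    (fun x hx => hasDerivAt_neg_inv_log hx.1 (hx.2.trans ht).ne)
    ((intervalIntegrable_iff_integrableOn_Ioc_of_le ht0).2 (integrableOn_inv_mul_log_sq ht))]
  simp

theorem mul_log_sq_le_two {t : ℝ} (ht0 : 0 < t) (ht1 : t ≤ 1) : t * log t ^ 2 ≤ 2 := by
  have hexp := quadratic_le_exp_of_nonneg (neg_nonneg.2 (log_nonpos ht0.le ht1))
  rw [exp_neg, exp_log ht0] at hexp
  have := mul_le_mul_of_nonneg_left hexp ht0.le
  rw [mul_inv_cancel₀ ht0.ne'] at this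
  nlinarith [log_nonpos ht0.le ht1]

end Real

theorem mul_u_sq {t : ℝ} (ht0 : 0 < t) (ht1 : t ≠ 1) :
    t * u t ^ 2 = (t - 1) ^ 2 * (t * log t ^ 2)⁻¹ := by
  rw [u, if_neg ht1]
  have := log_ne_zero_of_pos_of_ne_one ht0 ht1
  field_simp

theorem sq_mul_u_sq {t : ℝ} (ht0 : 0 < t) (ht1 : t ≠ 1) :
    t ^ 2 * u t ^ 2 = (t - 1) ^ 2 * (log t)⁻¹ ^ 2 := by
  rw [u, if_neg ht1]
  have := log_ne_zero_of_pos_of_ne_one ht0 ht1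
  field_simp

theorem v_eq_integral {t : ℝ} (ht1 : t ≤ 1) :
    v t = ∫ x in Ioc 0 t, (x - 1) ^ 2 * (x * log x ^ 2)⁻¹ := by
  rw [v, integral_Ioc_eq_integral_Ioo]
  exact setIntegral_congr_fun measurableSet_Ioo fun x hx =>
    mul_u_sq hx.1 (hx.2.trans_le ht1).ne

theorem integrableOn_sub_one_sq_mul_inv_mul_log_sq {t : ℝ} (ht1 : t < 1) :
    IntegrableOn (fun x => (x - 1) ^ 2 * (x * log x ^ 2)⁻¹) (Ioc 0 t) := by
  refine (integrableOn_inv_mul_log_sq ht1).mono' (by fun_prop) ?_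
  refine (ae_restrict_iff' measurableSet_Ioc).2 (ae_of_all _ fun x ⟨hx0, hxt⟩ => ?_)
  have hx1 : (x - 1) ^ 2 ≤ 1 := by nlinarith
  rw [norm_of_nonneg (by positivity)]
  exact mul_le_of_le_one_left (by positivity) hx1

theorem v_le_neg_inv_log {t : ℝ} (ht0 : 0 < t) (ht1 : t < 1) : v t ≤ -(log t)⁻¹ := by
  rw [v_eq_integral ht1.le, ← integral_inv_mul_log_sq ht0.le ht1]
  refine setIntegral_mono_on (integrableOn_sub_one_sq_mul_inv_mul_log_sq ht1)
    (integrableOn_inv_mul_log_sq ht1) measurableSet_Ioc fun x ⟨hx0, hxt⟩ => ?_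
  have hx1 : (x - 1) ^ 2 ≤ 1 := by nlinarith
  exact mul_le_of_le_one_left (by positivity) hx1

theorem neg_inv_log_div_four_le_v {t : ℝ} (ht0 : 0 < t) (ht : t ≤ 1 / 2) :
    -(log t)⁻¹ / 4 ≤ v t := by
  have ht1 : t < 1 := by linarith
  rw [v_eq_integral ht1.le, ← integral_inv_mul_log_sq ht0.le ht1, div_eq_inv_mul,
    ← integral_const_mul]
  refine setIntegral_mono_on ((integrableOn_inv_mul_log_sq ht1).const_mul _)
    (integrableOn_sub_one_sq_mul_inv_mul_log_sq ht1) measurableSet_Ioc fun x ⟨hx0, hxt⟩ => ?_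
  have hx1 : 4⁻¹ ≤ (x - 1) ^ 2 := by nlinarith
  exact mul_le_mul_of_nonneg_right hx1 (by positivity)

theorem inv_div_four_sub_le_of_bounds {L s t w : ℝ} (hL0 : 0 < L) (hL : L ≤ 1 / 10)
    (hs : s ≤ L ^ 2) (ht0 : 0 ≤ t) (ht : t ≤ 2 * L ^ 2) (hw0 : L / 4 ≤ w) (hw : w ≤ L) :
    L⁻¹ / 4 - 5 / 2 ≤ -2 * (3 * s - 2 * w + t) / (t + w) ^ 2 := by
  have hden : (t + w) ^ 2 ≤ 4 * L ^ 2 := by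
    have : t + w ≤ 2 * L := by nlinarith
    nlinarith
  have hnum : L - 10 * L ^ 2 ≤ -2 * (3 * s - 2 * w + t) := by nlinarith
  calc L⁻¹ / 4 - 5 / 2 = (L - 10 * L ^ 2) / (4 * L ^ 2) := by field_simp; ring
    _ ≤ (L - 10 * L ^ 2) / (t + w) ^ 2 :=
      div_le_div_of_nonneg_left (by nlinarith) (by nlinarith) hden
    _ ≤ -2 * (3 * s - 2 * w + t) / (t + w) ^ 2 := by gcongr

theorem neg_log_div_four_sub_le_f {t : ℝ} (ht0 : 0 < t) (ht : t ≤ 1 / 2)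
    (hlog : log t ≤ -10) : -log t / 4 - 5 / 2 ≤ f t := by
  have ht1 : t < 1 := by linarith
  have hL0 : 0 < -(log t)⁻¹ := neg_pos.2 (inv_lt_zero.2 (by linarith))
  have hL : -(log t)⁻¹ ≤ 1 / 10 := by
    rw [← inv_neg, inv_le_comm₀ (by linarith) (by norm_num)]; linarith
  have hs : t ^ 2 * u t ^ 2 ≤ (-(log t)⁻¹) ^ 2 := by
    rw [sq_mul_u_sq ht0 ht1.ne, neg_sq]
    exact mul_le_of_le_one_left (by positivity) (by nlinarith)
  have ht2 : t ≤ 2 * (-(log t)⁻¹) ^ 2 := by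
    have hlog0 : log t ≠ 0 := by linarith
    rw [neg_sq, inv_pow, ← div_eq_mul_inv, le_div_iff₀ (by positivity)]
    exact mul_log_sq_le_two ht0 ht1.le
  have hf := inv_div_four_sub_le_of_bounds hL0 hL hs ht0.le ht2
    (neg_inv_log_div_four_le_v ht0 ht) (v_le_neg_inv_log ht0 ht1)
  rw [← inv_neg, inv_inv] at hf
  rwa [f, mul_assoc 3]

theorem f_tendsto_atTop_at_zero :
    Filter.Tendsto f (nhdsWithin 0 (Set.Ioi 0)) Filter.atTop := by
  have hlower : Tendsto (fun t => -log t / 4 - 5 / 2) (𝓝[>] 0) atTop :=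
    tendsto_atTop_add_const_right _ _
      ((tendsto_neg_atBot_atTop.comp tendsto_log_nhdsGT_zero).atTop_div_const (by norm_num))
  refine tendsto_atTop_mono' _ ?_ hlower
  filter_upwards [Ioc_mem_nhdsGT (show (0 : ℝ) < 1 / 2 by norm_num),
    tendsto_log_nhdsGT_zero.eventually_le_atBot (-10)] with t ⟨ht0, ht⟩ hlog
  exact neg_log_div_four_sub_le_f ht0 ht hlog
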